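/- Let I₀(x) = ∑_{k=0}^∞ (x/2)^{2k} / (k!)². Fix nonnegative reals a₂, a₃, a₄ with (3/4)a₂² + (1/2)a₃² + 2a₄² = 1, and for λ > 0 set λᵢ = aᵢλ (i = 2,3,4) and λ₁ = λ. For σ ∈ [0, 1] define u_λ(σ) = 1 − σ² + ( 2(λ₁² − (1/4)λ₂² − (1/2)λ₃² + 2λ₄²) λ₁² ( I₀(σ/λ₁) − I₀(1/λ₁) ) ) / ( λ₁² I₀''(1/λ₁) − λ₁((1/4)λ₂² + (1/2)λ₃² − 2λ₄²) I₀'(1/λ₁) ). Then for every σ ∈ [0, 1], u_λ(σ) → 1 − σ² as λ → 0⁺ (the limit along λ tending to 0 from within (0, ∞), taken over those λ for which the denominator is nonzero, which holds for all sufficiently small λ > 0). -/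

import Mathlib

open Filter

/-- Modified Bessel function of the first kind of order 0. -/
noncomputable def besselI0 (x : ℝ) : ℝ :=
  ∑' k : ℕ, (x / 2) ^ (2 * k) / (k.factorial : ℝ) ^ 2

noncomputable def bb0 (k : ℕ) (x : ℝ) : ℝ := (x / 2) ^ (2 * k) / (k.factorial : ℝ) ^ 2
noncomputable def bb1 (k : ℕ) (x : ℝ) : ℝ := (k : ℝ) * (x / 2) ^ (2 * k - 1) / (k.factorial : ℝ) ^ 2
noncomputable def bb2 (k : ℕ) (x : ℝ) : ℝ :=
  (k : ℝ) * (2 * (k : ℝ) - 1) / 2 * (x / 2) ^ (2 * k - 2) / (k.factorial : ℝ) ^ 2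

section bounds
variable {x R : ℝ}

lemma pow_half_le (hx : |x| ≤ R) {j k : ℕ} (hj : j ≤ 2 * k) :
    |x / 2| ^ j ≤ ((max 1 (R / 2)) ^ 2) ^ k := by
  have hM1 : (1:ℝ) ≤ max 1 (R / 2) := le_max_left _ _
  have hxM : |x / 2| ≤ max 1 (R / 2) := by
    have : |x / 2| = |x| / 2 := by rw [abs_div]; norm_num
    rw [this]
    exact le_max_of_le_right (by linarith)
  calc |x / 2| ^ j ≤ (max 1 (R / 2)) ^ j := pow_le_pow_left₀ (abs_nonneg _) hxM j
    _ ≤ (max 1 (R / 2)) ^ (2 * k) := pow_le_pow_right₀ hM1 hj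
    _ = ((max 1 (R / 2)) ^ 2) ^ k := by rw [← pow_mul]

lemma fact_cast_one_le (k : ℕ) : (1:ℝ) ≤ (k.factorial : ℝ) := by
  exact_mod_cast k.factorial_pos

lemma bb0_bound (hx : |x| ≤ R) (k : ℕ) :
    ‖bb0 k x‖ ≤ ((max 1 (R / 2)) ^ 2) ^ k / (k.factorial : ℝ) := by
  have hf := fact_cast_one_le k
  have h1 : ‖bb0 k x‖ = |x / 2| ^ (2 * k) / (k.factorial : ℝ) ^ 2 := by
    rw [bb0, Real.norm_eq_abs, abs_div, abs_pow, abs_of_nonneg (by positivity : (0:ℝ) ≤ (k.factorial : ℝ) ^ 2)]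
  rw [h1]
  have h2 := pow_half_le hx (le_refl (2 * k))
  have h3 : (k.factorial : ℝ) ≤ (k.factorial : ℝ) ^ 2 := by nlinarith
  exact div_le_div₀ (by positivity) h2 (by linarith) h3

lemma bb1_bound (hx : |x| ≤ R) (k : ℕ) :
    ‖bb1 k x‖ ≤ (2 * (max 1 (R / 2)) ^ 2) ^ k / (k.factorial : ℝ) := by
  have hf := fact_cast_one_le k
  have h1 : ‖bb1 k x‖ = (k : ℝ) * |x / 2| ^ (2 * k - 1) / (k.factorial : ℝ) ^ 2 := by
    rw [bb1, Real.norm_eq_abs, abs_div, abs_mul, abs_pow,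
      abs_of_nonneg (by positivity : (0:ℝ) ≤ (k.factorial : ℝ) ^ 2),
      abs_of_nonneg (by positivity : (0:ℝ) ≤ (k:ℝ))]
  rw [h1, mul_pow]
  have h2 := pow_half_le hx (Nat.sub_le (2*k) 1)
  have hk : (k : ℝ) ≤ 2 ^ k := by exact_mod_cast (Nat.lt_two_pow_self (n := k)).le
  have h3 : (k.factorial : ℝ) ≤ (k.factorial : ℝ) ^ 2 := by nlinarith
  have h4 : (k : ℝ) * |x / 2| ^ (2 * k - 1) ≤ 2 ^ k * ((max 1 (R / 2)) ^ 2) ^ k :=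
    mul_le_mul hk h2 (by positivity) (by positivity)
  exact div_le_div₀ (by positivity) h4 (by linarith) h3

lemma bb2_bound (hx : |x| ≤ R) (k : ℕ) :
    ‖bb2 k x‖ ≤ (4 * (max 1 (R / 2)) ^ 2) ^ k / (k.factorial : ℝ) := by
  have hf := fact_cast_one_le k
  have h1 : ‖bb2 k x‖ = |(k : ℝ) * (2 * (k:ℝ) - 1) / 2| * |x / 2| ^ (2 * k - 2) / (k.factorial : ℝ) ^ 2 := by
    rw [bb2, Real.norm_eq_abs, abs_div, abs_mul, abs_pow,
      abs_of_nonneg (by positivity : (0:ℝ) ≤ (k.factorial : ℝ) ^ 2)]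
  rw [h1, mul_pow]
  have h2 := pow_half_le hx (Nat.sub_le (2*k) 2)
  have hk : (k : ℝ) ≤ 2 ^ k := by exact_mod_cast (Nat.lt_two_pow_self (n := k)).le
  have hcoef : |(k : ℝ) * (2 * (k:ℝ) - 1) / 2| ≤ 4 ^ k := by
    rcases Nat.eq_zero_or_pos k with h | h
    · subst h; norm_num
    · have hk1 : (1:ℝ) ≤ (k:ℝ) := by exact_mod_cast h
      have : |(k : ℝ) * (2 * (k:ℝ) - 1) / 2| = (k : ℝ) * (2 * (k:ℝ) - 1) / 2 := by
        rw [abs_of_nonneg]; nlinarith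
      rw [this]
      have h4k : ((2:ℝ) ^ k) ^ 2 = 4 ^ k := by
        rw [← pow_mul, mul_comm, pow_mul]; norm_num
      nlinarith [pow_pos (by norm_num : (0:ℝ) < 2) k]
  have h3 : (k.factorial : ℝ) ≤ (k.factorial : ℝ) ^ 2 := by nlinarith
  have h4 : |(k : ℝ) * (2 * (k:ℝ) - 1) / 2| * |x / 2| ^ (2 * k - 2)
      ≤ 4 ^ k * ((max 1 (R / 2)) ^ 2) ^ k :=
    mul_le_mul hcoef h2 (by positivity) (by positivity)
  exact div_le_div₀ (by positivity) h4 (by linarith) h3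

lemma summable_aux (C : ℝ) : Summable (fun k : ℕ => C ^ k / (k.factorial : ℝ)) :=
  Real.summable_pow_div_factorial C

lemma summable_bb0 (x : ℝ) : Summable (fun k => bb0 k x) :=
  Summable.of_norm_bounded (summable_aux _) (bb0_bound (le_refl |x|))

lemma summable_bb1 (x : ℝ) : Summable (fun k => bb1 k x) :=
  Summable.of_norm_bounded (summable_aux _) (bb1_bound (le_refl |x|))

lemma summable_bb2 (x : ℝ) : Summable (fun k => bb2 k x) :=
  Summable.of_norm_bounded (summable_aux _) (bb2_bound (le_refl |x|))

end bounds


lemma hasDerivAt_bb0 (k : ℕ) (x : ℝ) : HasDerivAt (bb0 k) (bb1 k x) x := by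
  have h : HasDerivAt (fun y : ℝ => (y / 2) ^ (2 * k))
      ((2 * k : ℕ) * (x / 2) ^ (2 * k - 1) * (1 / 2)) x :=
    ((hasDerivAt_id x).div_const 2).pow (2 * k)
  have := h.div_const ((k.factorial : ℝ) ^ 2)
  refine this.congr_deriv ?_
  simp only [bb1]
  push_cast
  ring

lemma hasDerivAt_bb1 (k : ℕ) (x : ℝ) : HasDerivAt (bb1 k) (bb2 k x) x := by
  have h : HasDerivAt (fun y : ℝ => (y / 2) ^ (2 * k - 1))
      ((2 * k - 1 : ℕ) * (x / 2) ^ (2 * k - 1 - 1) * (1 / 2)) x :=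
    ((hasDerivAt_id x).div_const 2).pow (2 * k - 1)
  have h2 := (h.const_mul (k : ℝ)).div_const ((k.factorial : ℝ) ^ 2)
  refine h2.congr_deriv ?_
  rcases k with _ | k
  · simp [bb2]
  · have e1 : 2 * (k + 1) - 1 - 1 = 2 * (k + 1) - 2 := by omega
    have e2 : ((2 * (k + 1) - 1 : ℕ) : ℝ) = 2 * ((k + 1 : ℕ) : ℝ) - 1 := by
      push_cast [Nat.cast_sub (by omega : 1 ≤ 2 * (k + 1))]; ring
    simp only [bb1, bb2]
    rw [e1, e2]
    push_cast
    ring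

noncomputable def J1 (x : ℝ) : ℝ := ∑' k, bb1 k x
noncomputable def J2 (x : ℝ) : ℝ := ∑' k, bb2 k x

lemma besselI0_eq : besselI0 = fun x => ∑' k, bb0 k x := rfl

lemma hasDerivAt_besselI0 (x : ℝ) : HasDerivAt besselI0 (J1 x) x := by
  rw [besselI0_eq]
  exact hasDerivAt_tsum_of_isPreconnected
    (summable_aux (2 * (max 1 ((|x| + 1) / 2)) ^ 2))
    Metric.isOpen_ball (convex_ball (0:ℝ) (|x| + 1)).isPreconnected
    (fun k y _ => hasDerivAt_bb0 k y)
    (fun k y hy => bb1_bound (le_of_lt (mem_ball_zero_iff.mp hy)) k)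
    (mem_ball_zero_iff.mpr (by rw [Real.norm_eq_abs]; linarith))
    (summable_bb0 x)
    (mem_ball_zero_iff.mpr (by rw [Real.norm_eq_abs]; linarith))

lemma hasDerivAt_J1 (x : ℝ) : HasDerivAt J1 (J2 x) x := by
  exact hasDerivAt_tsum_of_isPreconnected
    (summable_aux (4 * (max 1 ((|x| + 1) / 2)) ^ 2))
    Metric.isOpen_ball (convex_ball (0:ℝ) (|x| + 1)).isPreconnected
    (fun k y _ => hasDerivAt_bb1 k y)
    (fun k y hy => bb2_bound (le_of_lt (mem_ball_zero_iff.mp hy)) k)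
    (mem_ball_zero_iff.mpr (by rw [Real.norm_eq_abs]; linarith))
    (summable_bb1 x)
    (mem_ball_zero_iff.mpr (by rw [Real.norm_eq_abs]; linarith))

lemma deriv_besselI0_eq : deriv besselI0 = J1 :=
  funext fun x => (hasDerivAt_besselI0 x).deriv

lemma deriv2_besselI0_eq : deriv (deriv besselI0) = J2 := by
  rw [deriv_besselI0_eq]
  exact funext fun x => (hasDerivAt_J1 x).deriv
lemma bb0_nonneg (k : ℕ) (x : ℝ) : 0 ≤ bb0 k x := by
  rw [bb0, pow_mul]; positivity

lemma besselI0_nonneg (x : ℝ) : 0 ≤ besselI0 x := by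
  rw [besselI0_eq]; exact tsum_nonneg fun k => bb0_nonneg k x

lemma one_le_besselI0 (x : ℝ) : 1 ≤ besselI0 x := by
  have h := Summable.le_tsum (summable_bb0 x) 0 (fun k _ => bb0_nonneg k x)
  rw [besselI0_eq]
  simpa [bb0] using h

lemma besselI0_mono {y x : ℝ} (hy : 0 ≤ y) (hxy : y ≤ x) : besselI0 y ≤ besselI0 x := by
  rw [besselI0_eq]
  refine Summable.tsum_le_tsum (fun k => ?_) (summable_bb0 y) (summable_bb0 x)
  simp only [bb0]
  gcongr

lemma bb1_nonneg (k : ℕ) {x : ℝ} (hx : 0 ≤ x) : 0 ≤ bb1 k x := by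
  rw [bb1]
  have : (0:ℝ) ≤ x / 2 := by linarith
  positivity

lemma J1_nonneg {x : ℝ} (hx : 0 ≤ x) : 0 ≤ J1 x :=
  tsum_nonneg fun k => bb1_nonneg k hx

lemma bb1_le (k : ℕ) {x : ℝ} (hx : 0 ≤ x) :
    bb1 k x ≤ (bb0 (k - 1) x + bb0 k x) / 2 := by
  rcases k with _ | k
  · norm_num [bb1, bb0]
  · have hx2 : (0:ℝ) ≤ x / 2 := by linarith
    set A : ℝ := (x/2) ^ k / (k.factorial : ℝ) with hA
    set B : ℝ := (x/2) ^ (k+1) / ((k+1).factorial : ℝ) with hB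
    have hA2 : A ^ 2 = bb0 k x := by
      rw [hA, div_pow, ← pow_mul, bb0, mul_comm]
    have hB2 : B ^ 2 = bb0 (k+1) x := by
      rw [hB, div_pow, ← pow_mul, bb0, mul_comm]
    have hAB : A * B = bb1 (k+1) x := by
      rw [hA, hB, bb1]
      have e : 2 * (k + 1) - 1 = k + (k + 1) := by omega
      rw [e, pow_add, Nat.factorial_succ]
      have hfk : ((k.factorial : ℝ)) ≠ 0 := by positivity
      push_cast
      field_simp
      ring
    rw [Nat.add_sub_cancel, ← hA2, ← hB2, ← hAB]
    nlinarith [sq_nonneg (A - B)]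

lemma summable_shift (x : ℝ) : Summable (fun k : ℕ => bb0 (k - 1) x) := by
  have : Summable (fun k : ℕ => bb0 ((k + 1) - 1) x) := by
    simpa using summable_bb0 x
  exact (summable_nat_add_iff 1).mp this

lemma J1_le {x : ℝ} (hx : 0 ≤ x) : J1 x ≤ 3 / 2 * besselI0 x := by
  have h1 : J1 x ≤ ∑' k, (bb0 (k - 1) x + bb0 k x) / 2 := by
    refine Summable.tsum_le_tsum (fun k => bb1_le k hx) (summable_bb1 x) ?_
    exact ((summable_shift x).add (summable_bb0 x)).div_const 2
  have h2 : ∑' k, (bb0 (k - 1) x + bb0 k x) / 2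
      = ((∑' k, bb0 (k - 1) x) + ∑' k, bb0 k x) / 2 := by
    rw [tsum_div_const, Summable.tsum_add (summable_shift x) (summable_bb0 x)]
  have h3 : ∑' k : ℕ, bb0 (k - 1) x = 1 + besselI0 x := by
    rw [Summable.tsum_eq_zero_add (summable_shift x)]
    have : bb0 (0 - 1) x = 1 := by simp [bb0]
    rw [this, besselI0_eq]
    norm_num
  have h4 := one_le_besselI0 x
  have hI : (∑' k, bb0 k x) = besselI0 x := rfl
  rw [h2, h3, hI] at h1
  linarith
lemma bb0_half_le_bb2_succ (k : ℕ) {x : ℝ} (hx : 0 ≤ x) :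
    bb0 k x / 2 ≤ bb2 (k + 1) x := by
  have hx2 : (0:ℝ) ≤ x / 2 := by linarith
  have ht : (0:ℝ) ≤ (x/2) ^ (2*k) := by positivity
  have hf : (0:ℝ) < (k.factorial : ℝ) := by positivity
  have key : (1:ℝ) / (2 * (k.factorial : ℝ)^2)
      ≤ ((k:ℝ)+1) * (2*((k:ℝ)+1)-1) / 2 / ((((k:ℝ)+1) * (k.factorial : ℝ))^2) := by
    rw [div_le_div_iff₀ (by positivity) (by positivity)]
    have hk0 : (0:ℝ) ≤ (k:ℝ) := Nat.cast_nonneg k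
    nlinarith [sq_nonneg ((k:ℝ) * (k.factorial:ℝ)), mul_pos hf hf]
  have e : 2 * (k + 1) - 2 = 2 * k := by omega
  calc bb0 k x / 2 = (x/2)^(2*k) * (1 / (2 * (k.factorial : ℝ)^2)) := by
        rw [bb0]; ring
    _ ≤ (x/2)^(2*k) * (((k:ℝ)+1) * (2*((k:ℝ)+1)-1) / 2 / ((((k:ℝ)+1) * (k.factorial : ℝ))^2)) :=
        mul_le_mul_of_nonneg_left key ht
    _ = bb2 (k + 1) x := by
        rw [bb2, e, Nat.factorial_succ]
        push_cast
        ring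

lemma J2_ge {x : ℝ} (hx : 0 ≤ x) : besselI0 x / 2 ≤ J2 x := by
  have h0 : bb2 0 x = 0 := by simp [bb2]
  rw [J2, Summable.tsum_eq_zero_add (summable_bb2 x), h0, zero_add]
  have hsum2 : Summable (fun k : ℕ => bb2 (k + 1) x) :=
    (summable_nat_add_iff (f := fun k => bb2 k x) 1).mpr (summable_bb2 x)
  have h1 : ∑' k : ℕ, bb0 k x / 2 ≤ ∑' k : ℕ, bb2 (k + 1) x :=
    Summable.tsum_le_tsum (fun k => bb0_half_le_bb2_succ k hx) ((summable_bb0 x).div_const 2) hsum2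
  have h2 : (∑' k : ℕ, bb0 k x / 2) = besselI0 x / 2 := by
    rw [tsum_div_const]; rfl
  linarith
set_option maxHeartbeats 1600000

/-- The nondimensionalized weak-adherence Poiseuille velocity profile converges
pointwise to the classical parabolic profile `1 − σ²` as `λ → 0⁺`; the
denominator is nonzero for all sufficiently small `λ > 0`. -/
theorem poiseuille_weak_adherence_convergence
    (a₂ a₃ a₄ : ℝ) (h₂ : 0 ≤ a₂) (h₃ : 0 ≤ a₃) (h₄ : 0 ≤ a₄)
    (hsum : 3 / 4 * a₂ ^ 2 + 1 / 2 * a₃ ^ 2 + 2 * a₄ ^ 2 = 1)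
    (σ : ℝ) (hσ : σ ∈ Set.Icc (0:ℝ) 1)
    (Den : ℝ → ℝ)
    (hDen : ∀ lam : ℝ, Den lam =
      lam ^ 2 * deriv (deriv besselI0) (1 / lam)
        - lam * (1 / 4 * (a₂ * lam) ^ 2 + 1 / 2 * (a₃ * lam) ^ 2
            - 2 * (a₄ * lam) ^ 2) * deriv besselI0 (1 / lam)) :
    (∀ᶠ lam in nhdsWithin (0:ℝ) (Set.Ioi 0), Den lam ≠ 0) ∧
    Tendsto (fun lam : ℝ =>
        1 - σ ^ 2 +
          2 * (lam ^ 2 - 1 / 4 * (a₂ * lam) ^ 2 - 1 / 2 * (a₃ * lam) ^ 2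
              + 2 * (a₄ * lam) ^ 2) * lam ^ 2
            * (besselI0 (σ / lam) - besselI0 (1 / lam)) / Den lam)
      (nhdsWithin 0 (Set.Ioi 0)) (nhds (1 - σ ^ 2)) := by
  obtain ⟨hσ0, hσ1⟩ := hσ
  set c : ℝ := 1 / 4 * a₂ ^ 2 + 1 / 2 * a₃ ^ 2 - 2 * a₄ ^ 2 with hcdef
  set K : ℝ := 1 - 1 / 4 * a₂ ^ 2 - 1 / 2 * a₃ ^ 2 + 2 * a₄ ^ 2 with hKdef
  have hK0 : 0 ≤ K := by rw [hKdef]; nlinarith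
  set ε : ℝ := min (1/2) (1 / (6 * (|c| + 1))) with hεdef
  have hcabs : (0:ℝ) < |c| + 1 := by positivity
  have hε : 0 < ε := lt_min (by norm_num) (by positivity)
  have hmem : Set.Ioo (0:ℝ) ε ∈ nhdsWithin (0:ℝ) (Set.Ioi 0) :=
    Ioo_mem_nhdsGT_of_mem (Set.mem_Ico.mpr ⟨le_refl 0, hε⟩)
  -- key denominator bound
  have hden : ∀ lam ∈ Set.Ioo (0:ℝ) ε,
      lam ^ 2 * besselI0 (1/lam) / 4 ≤ Den lam := by
    rintro lam ⟨hl0, hlε⟩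
    have hx : (0:ℝ) ≤ 1 / lam := by positivity
    have hI1 := one_le_besselI0 (1/lam)
    have hJ1n := J1_nonneg hx
    have hJ1le := J1_le hx
    have hJ2 := J2_ge hx
    have hclam : lam * |c| ≤ 1 / 6 := by
      have h1 : lam ≤ 1 / (6 * (|c| + 1)) := le_of_lt (lt_of_lt_of_le hlε (min_le_right _ _))
      have h2 : lam * |c| ≤ lam * (|c| + 1) := by nlinarith
      have h3 : lam * (|c| + 1) ≤ (1 / (6 * (|c| + 1))) * (|c| + 1) := by nlinarith
      have h4 : (1 / (6 * (|c| + 1))) * (|c| + 1) = 1 / 6 := by field_simp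
      linarith
    rw [hDen lam, deriv2_besselI0_eq, deriv_besselI0_eq]
    have hfac : 1 / 4 * (a₂ * lam) ^ 2 + 1 / 2 * (a₃ * lam) ^ 2 - 2 * (a₄ * lam) ^ 2
        = c * lam ^ 2 := by rw [hcdef]; ring
    rw [hfac]
    have hcomb : c * J1 (1/lam) ≤ 3/2 * (|c| * besselI0 (1/lam)) := by
      have e2 : c * J1 (1/lam) ≤ |c| * J1 (1/lam) :=
        mul_le_mul_of_nonneg_right (le_abs_self c) hJ1n
      have e3 : |c| * J1 (1/lam) ≤ |c| * (3/2 * besselI0 (1/lam)) :=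
        mul_le_mul_of_nonneg_left hJ1le (abs_nonneg c)
      linarith
    have hlam3 : (0:ℝ) < lam ^ 3 := by positivity
    have hlamI : (0:ℝ) ≤ lam ^ 2 * besselI0 (1/lam) :=
      mul_nonneg (sq_nonneg lam) (by linarith)
    have p1 := mul_le_mul_of_nonneg_left hcomb (le_of_lt hlam3)
    have p2 := mul_le_mul_of_nonneg_right hclam hlamI
    have p3 := mul_le_mul_of_nonneg_left hJ2 (sq_nonneg lam)
    linarith [p1, p2, p3]
  have hdenpos : ∀ lam ∈ Set.Ioo (0:ℝ) ε, 0 < Den lam := by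
    rintro lam hlam
    have hge := hden lam hlam
    obtain ⟨hl0, _⟩ := hlam
    have hI1 := one_le_besselI0 (1/lam)
    have hIpos : (0:ℝ) < besselI0 (1/lam) := lt_of_lt_of_le one_pos hI1
    have : (0:ℝ) < lam ^ 2 * besselI0 (1/lam) / 4 :=
      div_pos (mul_pos (pow_pos hl0 2) hIpos) (by norm_num)
    linarith
  constructor
  · filter_upwards [hmem] with lam hlam
    exact ne_of_gt (hdenpos lam hlam)
  · have hF : Tendsto (fun lam : ℝ =>
        2 * (lam ^ 2 - 1 / 4 * (a₂ * lam) ^ 2 - 1 / 2 * (a₃ * lam) ^ 2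
            + 2 * (a₄ * lam) ^ 2) * lam ^ 2
          * (besselI0 (σ / lam) - besselI0 (1 / lam)) / Den lam)
        (nhdsWithin 0 (Set.Ioi 0)) (nhds 0) := by
      apply squeeze_zero_norm' (a := fun lam : ℝ => 8 * K * lam ^ 2)
      · filter_upwards [hmem] with lam hlam
        obtain ⟨hl0, hlε⟩ := hlam
        have hx : (0:ℝ) ≤ 1 / lam := by positivity
        have hσx : (0:ℝ) ≤ σ / lam := by positivity
        have hσx' : σ / lam ≤ 1 / lam := by gcongr
        have hI1 := one_le_besselI0 (1/lam)
        have hIσ0 := besselI0_nonneg (σ/lam)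
        have hmono := besselI0_mono hσx hσx'
        have hDpos := hdenpos lam ⟨hl0, hlε⟩
        have hDge := hden lam ⟨hl0, hlε⟩
        have hfacK : 2 * (lam ^ 2 - 1 / 4 * (a₂ * lam) ^ 2 - 1 / 2 * (a₃ * lam) ^ 2
            + 2 * (a₄ * lam) ^ 2) * lam ^ 2 = 2 * K * lam ^ 4 := by rw [hKdef]; ring
        rw [Real.norm_eq_abs, hfacK, abs_div, abs_of_pos hDpos]
        have hnum : |2 * K * lam ^ 4 * (besselI0 (σ / lam) - besselI0 (1 / lam))|
            ≤ 2 * K * lam ^ 4 * besselI0 (1/lam) := by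
          rw [abs_mul]
          have h1 : |2 * K * lam ^ 4| = 2 * K * lam ^ 4 := abs_of_nonneg (by positivity)
          have h2 : |besselI0 (σ / lam) - besselI0 (1 / lam)| ≤ besselI0 (1/lam) := by
            rw [abs_sub_comm, abs_of_nonneg (by linarith)]
            linarith
          rw [h1]
          have h3 : (0:ℝ) ≤ 2 * K * lam ^ 4 := by positivity
          exact mul_le_mul_of_nonneg_left h2 h3
        have hdiv : |2 * K * lam ^ 4 * (besselI0 (σ / lam) - besselI0 (1 / lam))| / Den lam
            ≤ (2 * K * lam ^ 4 * besselI0 (1/lam)) / (lam ^ 2 * besselI0 (1/lam) / 4) := by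
          have hIpos : (0:ℝ) < besselI0 (1/lam) := lt_of_lt_of_le one_pos hI1
          exact div_le_div₀ (by positivity) hnum
            (div_pos (mul_pos (pow_pos hl0 2) hIpos) (by norm_num)) hDge
        have heq : (2 * K * lam ^ 4 * besselI0 (1/lam)) / (lam ^ 2 * besselI0 (1/lam) / 4)
            = 8 * K * lam ^ 2 := by
          have hIne : besselI0 (1/lam) ≠ 0 := by linarith
          have hlne : lam ≠ 0 := ne_of_gt hl0
          field_simp
          ring
        rw [heq] at hdiv
        exact hdiv
      · have hcont : Tendsto (fun lam : ℝ => 8 * K * lam ^ 2) (nhds 0) (nhds (8 * K * (0:ℝ) ^ 2)) :=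
          Continuous.tendsto (by continuity) 0
        have : (8 * K * (0:ℝ) ^ 2) = 0 := by ring
        rw [this] at hcont
        exact hcont.mono_left nhdsWithin_le_nhds
    have := hF.const_add (1 - σ ^ 2)
    simpa using this
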